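/- arXiv:2304.08000 — 2 statements merged into one kernel-verified Lean document; each statement's English description precedes it below -/
import Mathlib

section
/- Let M be a matroid with adjoint adM and adjoint map φ. If hyperplanes H₁,…,H_m of M satisfy the strict chain H₁∩⋯∩H_m ⊊ H₁∩⋯∩H_{m−1} ⊊ ⋯ ⊊ H₁∩H₂ ⊊ H₁, then {φ(H₁),…,φ(H_m)} is an independent set of adM. -/
/-!
An adjoint map strictly reverses every covering pair of flats; together with `r(adM) = r(M)`
this makes it rank-reversing, `r(φ F) + r(F) = r(M)`. Hence `φ H ⊆ φ V` for a hyperplane `H`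
forces `V ⊆ H`. For the chain, `G = H₁ ∩ ⋯ ∩ H_{j-1} ⊄ H_j`, so the atom `φ(H_j)` is not inside
the flat `φ(G)`, which contains `φ(H₁), …, φ(H_{j-1})`: each chosen point of `φ(H_j)` lies outside
the closure of the previous ones.
-/

open Set Matroid
open scoped Matroid

namespace AdjointPaper

variable {α β γ : Type*}

/-- The rank of a set `X` in a matroid `M`: the supremum of cardinalities of
independent subsets of `X`. -/
noncomputable def mrank (M : Matroid α) (X : Set α) : ℕ :=
  sSup (Set.ncard '' {I | M.Indep I ∧ I ⊆ X})

/-- The rank of a matroid. -/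
noncomputable def mrk (M : Matroid α) : ℕ := mrank M M.E

/-- A hyperplane of `M`: a coatom of the lattice of flats. -/
def IsHyperplane (M : Matroid α) (H : Set α) : Prop :=
  M.IsFlat H ∧ H ≠ M.E ∧ ∀ F, M.IsFlat F → H ⊂ F → F = M.E

/-- An atom of the lattice of flats of `M`. -/
def IsFlatAtom (M : Matroid α) (P : Set α) : Prop :=
  M.IsFlat P ∧ M.closure ∅ ⊂ P ∧ ∀ F, M.IsFlat F → M.closure ∅ ⊂ F → F ⊆ P → F = P

/-- `e` is a loop of `M`. -/
def IsLoop (M : Matroid α) (e : α) : Prop := e ∈ M.E ∧ ¬ M.Indep {e}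

/-- `M` is loopless. -/
def Loopless (M : Matroid α) : Prop := ∀ e ∈ M.E, M.Indep {e}

/-- `M` is simple: loopless and with no two parallel elements. -/
def Simple (M : Matroid α) : Prop :=
  (∀ e ∈ M.E, M.Indep {e}) ∧
    ∀ e ∈ M.E, ∀ f ∈ M.E, M.closure {e} = M.closure {f} → e = f

/-- `φ` is an adjoint map from `M` to `N`: an injective, order-reversing map on
flats taking hyperplanes of `M` bijectively onto the atoms of `N`, with
`N` of the same rank as `M`. -/
structure IsAdjointMap (M : Matroid α) (N : Matroid β) (φ : Set α → Set β) : Prop where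
  rank_eq : mrk N = mrk M
  flat : ∀ ⦃F⦄, M.IsFlat F → N.IsFlat (φ F)
  inj : ∀ ⦃F F'⦄, M.IsFlat F → M.IsFlat F' → φ F = φ F' → F = F'
  antitone : ∀ ⦃F F'⦄, M.IsFlat F → M.IsFlat F' → F ⊆ F' → φ F' ⊆ φ F
  hyper_atom : ∀ ⦃H⦄, IsHyperplane M H → IsFlatAtom N (φ H)
  atom_surj : ∀ ⦃P⦄, IsFlatAtom N P → ∃ H, IsHyperplane M H ∧ φ H = P

/-- `N` is an adjoint of `M`. -/
def IsAdjoint (M : Matroid α) (N : Matroid β) : Prop := ∃ φ, IsAdjointMap M N φ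

/-- Isomorphism of matroids. -/
def Iso (M : Matroid α) (N : Matroid β) : Prop :=
  ∃ f : α → β, Set.BijOn f M.E N.E ∧ ∀ I ⊆ M.E, (M.Indep I ↔ N.Indep (f '' I))

/-- Connectedness: `M` has nonempty ground set and is not a direct sum of two
matroids on nonempty ground sets. -/
def Conn (M : Matroid α) : Prop :=
  M.E.Nonempty ∧ ∀ (N₁ N₂ : Matroid α) (h : Disjoint N₁.E N₂.E),
    N₁.E.Nonempty → N₂.E.Nonempty → M ≠ Matroid.disjointSum N₁ N₂ h

/-- A circuit of `M`: a minimal dependent set. -/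
def IsCircuit (M : Matroid α) (C : Set α) : Prop :=
  C ⊆ M.E ∧ ¬ M.Indep C ∧ ∀ D, D ⊂ C → M.Indep D

/-- `K` is a connected component of `M`. -/
def ConnComponent (M : Matroid α) (K : Set α) : Prop :=
  K ⊆ M.E ∧ K.Nonempty ∧ Conn (M ↾ K) ∧
    ∀ C, IsCircuit M C → C ⊆ K ∨ Disjoint C K

/-- `M` is a modular matroid: every pair of flats is a modular pair. -/
def Modular (M : Matroid α) : Prop :=
  ∀ F F', M.IsFlat F → M.IsFlat F' →
    mrank M (M.closure (F ∪ F')) + mrank M (F ∩ F') = mrank M F + mrank M F'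

/-- The lattice of flats of `N` is isomorphic to the opposite of the lattice of
flats of `M`. -/
def FlatOpIso (M : Matroid α) (N : Matroid β) : Prop :=
  ∃ ψ : Set α → Set β, (∀ F, M.IsFlat F → N.IsFlat (ψ F)) ∧
    (∀ F F', M.IsFlat F → M.IsFlat F' → (F ⊆ F' ↔ ψ F' ⊆ ψ F)) ∧
    ∀ G, N.IsFlat G → ∃ F, M.IsFlat F ∧ ψ F = G

/-- A linear subclass of `M`: a set of hyperplanes closed under the hyperplanes
through a comodular intersection of two of its members. The lattice of all
linear subclasses ordered by inclusion is the extension lattice `E(M)`. -/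
def LinearSubclass (M : Matroid α) (S : Set (Set α)) : Prop :=
  (∀ H ∈ S, IsHyperplane M H) ∧
    ∀ H₁ ∈ S, ∀ H₂ ∈ S, mrank M (H₁ ∩ H₂) = mrk M - 2 →
      ∀ H₃, IsHyperplane M H₃ → H₁ ∩ H₂ ⊆ H₃ → H₃ ∈ S

/-- `N` is (isomorphic to) the projective geometry `PG (r-1, F)`, via a
representation `f` hitting every point of the projective space exactly once. -/
def IsProjGeomRep (N : Matroid β) (r : ℕ) (F : Type*) [Field F] : Prop :=
  ∃ f : β → (Fin r → F),
    (∀ e ∈ N.E, f e ≠ 0) ∧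
    (∀ e ∈ N.E, ∀ e' ∈ N.E,
      Submodule.span F {f e} = Submodule.span F {f e'} → e = e') ∧
    (∀ v : Fin r → F, v ≠ 0 → ∃ e ∈ N.E, Submodule.span F {f e} = Submodule.span F {v}) ∧
    ∀ I, I ⊆ N.E → (N.Indep I ↔ LinearIndependent F (fun x : I => f x.1))

/-- `N` is (isomorphic to) the finite projective geometry `PG (r-1, q)`. -/
def IsProjGeom (N : Matroid β) (r q : ℕ) : Prop :=
  ∃ (F : Type) (instF : Field F) (instT : Fintype F),
    @Fintype.card F instT = q ∧ @IsProjGeomRep _ N r F instF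

/-- `M` is a projective plane: a simple rank-3 matroid in which every line has
at least three points and every two lines meet. -/
def IsProjPlane (M : Matroid α) : Prop :=
  Simple M ∧ mrk M = 3 ∧
    (∀ L, M.IsFlat L → mrank M L = 2 → 3 ≤ L.ncard) ∧
    ∀ L L', M.IsFlat L → M.IsFlat L' → mrank M L = 2 → mrank M L' = 2 → (L ∩ L').Nonempty

/-- `N` is (isomorphic to) the uniform matroid `U_{r,m}`. -/
def IsUnif (N : Matroid β) (r m : ℕ) : Prop :=
  N.E.Finite ∧ N.E.ncard = m ∧ ∀ I, I ⊆ N.E → (N.Indep I ↔ I.Finite ∧ I.ncard ≤ r)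

section Rank

variable {M : Matroid α} {X Y F G : Set α} {e : α}

lemma _root_.Matroid.IsFlat.closure_subset_of_subset (hF : M.IsFlat F) (hXF : X ⊆ F) :
    M.closure X ⊆ F :=
  hF.closure ▸ M.closure_subset_closure hXF

lemma _root_.Matroid.IsFlat.inter {P Q : Set α} (hP : M.IsFlat P) (hQ : M.IsFlat Q) :
    M.IsFlat (P ∩ Q) := by
  rw [inter_eq_iInter]
  exact IsFlat.iInter fun b ↦ by cases b <;> assumption

lemma _root_.Matroid.IsFlat.biInter {ι : Type*} {s : Set ι} {Fs : ι → Set α} (hs : s.Nonempty)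
    (hFs : ∀ i ∈ s, M.IsFlat (Fs i)) : M.IsFlat (⋂ i ∈ s, Fs i) := by
  have := hs.to_subtype
  rw [biInter_eq_iInter]
  exact IsFlat.iInter fun i ↦ hFs i i.2

variable [M.Finite]

lemma cast_mrank (M : Matroid α) [M.Finite] (X : Set α) : (mrank M X : ℕ∞) = M.eRk X := by
  obtain ⟨I, hI⟩ := M.exists_isBasis' X
  have hIfin : I.Finite := M.ground_finite.subset hI.indep.subset_ground
  have hmax : IsGreatest (Set.ncard '' {J | M.Indep J ∧ J ⊆ X}) I.ncard := by
    refine ⟨⟨I, ⟨hI.indep, hI.subset⟩, rfl⟩, ?_⟩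
    rintro _ ⟨J, ⟨hJ, hJX⟩, rfl⟩
    have hJfin : J.Finite := M.ground_finite.subset hJ.subset_ground
    have := hJ.encard_le_eRk_of_subset hJX
    rw [← hI.encard_eq_eRk, ← hJfin.cast_ncard_eq, ← hIfin.cast_ncard_eq] at this
    exact_mod_cast this
  rw [mrank, hmax.csSup_eq, hIfin.cast_ncard_eq, hI.encard_eq_eRk]

lemma mrank_mono (h : X ⊆ Y) : mrank M X ≤ mrank M Y := by
  have := M.eRk_mono h
  rwa [← cast_mrank, ← cast_mrank, Nat.cast_le] at this

lemma mrank_empty (M : Matroid α) [M.Finite] : mrank M ∅ = 0 := by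
  have := M.eRk_empty
  rwa [← cast_mrank, Nat.cast_eq_zero] at this

lemma mrank_closure (M : Matroid α) [M.Finite] (X : Set α) :
    mrank M (M.closure X) = mrank M X := by
  have := M.eRk_closure_eq X
  rwa [← cast_mrank, ← cast_mrank, Nat.cast_inj] at this

lemma mrank_insert_of_notMem_closure (he : e ∈ M.E \ M.closure X) :
    mrank M (insert e X) = mrank M X + 1 := by
  have := eRk_insert_eq_add_one he
  rwa [← cast_mrank, ← cast_mrank, ← Nat.cast_one, ← Nat.cast_add, Nat.cast_inj] at this

lemma _root_.Matroid.IsFlat.mrank_closure_insert (hF : M.IsFlat F) (he : e ∈ M.E \ F) :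
    mrank M (M.closure (insert e F)) = mrank M F + 1 := by
  rw [mrank_closure, mrank_insert_of_notMem_closure (by rwa [hF.closure])]

lemma _root_.Matroid.IsFlat.eq_of_subset_of_mrank_le (hF : M.IsFlat F) (hG : M.IsFlat G)
    (hFG : F ⊆ G) (h : mrank M G ≤ mrank M F) : F = G := by
  rw [← hF.closure, ← hG.closure]
  refine (M.isRkFinite_set F).closure_eq_closure_of_subset_of_eRk_ge_eRk hFG ?_
  rw [← cast_mrank, ← cast_mrank]
  exact_mod_cast h

lemma _root_.Matroid.IsFlat.mrank_lt_of_ssubset (hF : M.IsFlat F) (hG : M.IsFlat G) (h : F ⊂ G) :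
    mrank M F < mrank M G :=
  lt_of_le_of_ne (mrank_mono h.subset)
    fun heq ↦ h.ne (hF.eq_of_subset_of_mrank_le hG h.subset heq.ge)

lemma _root_.Matroid.IsFlat.inter_eq_of_mrank_eq_add_one {P Q : Set α} (hG : M.IsFlat G)
    (hP : M.IsFlat P) (hQ : M.IsFlat Q) (hGP : G ⊆ P) (hGQ : G ⊆ Q) (hPQ : P ≠ Q)
    (hrP : mrank M P = mrank M G + 1) (hrQ : mrank M Q = mrank M G + 1) : P ∩ Q = G := by
  have hPQP : P ∩ Q ⊂ P := inter_subset_left.ssubset_of_ne fun h ↦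
    hPQ (hP.eq_of_subset_of_mrank_le hQ (inter_eq_left.1 h) (by omega))
  refine (hG.eq_of_subset_of_mrank_le (hP.inter hQ) (subset_inter hGP hGQ) ?_).symm
  have := (hP.inter hQ).mrank_lt_of_ssubset hP hPQP
  omega

end Rank

lemma _root_.Matroid.indep_range_of_notMem_closure_image_Iio {N : Matroid β} {ι : Type*}
    [LinearOrder ι] [Fintype ι] {f : ι → β} (hE : ∀ i, f i ∈ N.E)
    (h : ∀ i, f i ∉ N.closure (f '' Iio i)) : N.Indep (range f) := by
  classical
  suffices ∀ s : Finset ι, N.Indep (f '' s) by simpa using this Finset.univ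
  intro s
  induction s using Finset.induction_on_max with
  | empty => simp
  | insert a s hlt ih =>
    rw [Finset.coe_insert, image_insert_eq, ih.insert_indep_iff]
    exact Or.inl ⟨hE a, fun hcl ↦ h a (N.closure_subset_closure (image_mono hlt) hcl)⟩

lemma IsFlatAtom.closure_singleton_eq {N : Matroid β} {P : Set β} {x : β} (hP : IsFlatAtom N P)
    (hx : x ∈ P \ N.closure ∅) : N.closure {x} = P :=
  hP.2.2 _ (isFlat_closure _)
    ⟨N.closure_subset_closure (empty_subset _),
      fun h ↦ hx.2 (h (N.mem_closure_self x (hP.1.subset_ground hx.1)))⟩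
    (hP.1.closure_subset_of_subset (singleton_subset_iff.2 hx.1))

namespace IsAdjointMap

variable {M : Matroid α} {N : Matroid β} [M.Finite] [N.Finite] {φ : Set α → Set β}
  {A B F G H P Q V W : Set α} {q y : α}

lemma mrank_add_mrank_le (hφ : IsAdjointMap M N φ) (hA : M.IsFlat A) (hB : M.IsFlat B)
    (hAB : A ⊆ B) : mrank N (φ B) + mrank M B ≤ mrank N (φ A) + mrank M A := by
  induction hn : mrank M B - mrank M A generalizing A with
  | zero => rw [hA.eq_of_subset_of_mrank_le hB hAB (by omega)]
  | succ n ih =>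
    obtain ⟨e, heB, heA⟩ := not_subset.1 fun hBA ↦ by
      rw [hAB.antisymm hBA] at hn
      omega
    have heE : e ∈ M.E := hB.subset_ground heB
    set A' := M.closure (insert e A)
    have hA' : M.IsFlat A' := isFlat_closure _
    have hins : insert e A ⊆ M.E := insert_subset heE hA.subset_ground
    have hAA' : A ⊆ A' := (subset_insert _ _).trans (M.subset_closure _ hins)
    have heA' : e ∈ A' := M.subset_closure _ hins (mem_insert e A)
    have hrA' : mrank M A' = mrank M A + 1 := hA.mrank_closure_insert ⟨heE, heA⟩
    have hφA' : φ A' ⊂ φ A := (hφ.antitone hA hA' hAA').ssubset_of_ne fun h ↦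
      heA (hφ.inj hA' hA h ▸ heA')
    have := (hφ.flat hA').mrank_lt_of_ssubset (hφ.flat hA) hφA'
    have := ih hA' (hB.closure_subset_of_subset (insert_subset heB hAB)) (by omega)
    omega

lemma mrank_add_mrank_eq (hφ : IsAdjointMap M N φ) (hF : M.IsFlat F) :
    mrank N (φ F) + mrank M F = mrk M := by
  have hle := hφ.mrank_add_mrank_le hF M.ground_isFlat hF.subset_ground
  have hge := hφ.mrank_add_mrank_le (isFlat_closure _) hF
    (hF.closure_subset_of_subset (empty_subset _))
  have hloops : mrank N (φ (M.closure ∅)) ≤ mrk N :=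
    mrank_mono (hφ.flat (isFlat_closure _)).subset_ground
  rw [mrank_closure, mrank_empty] at hge
  have := hφ.rank_eq
  unfold mrk at *
  omega

lemma image_ground (hφ : IsAdjointMap M N φ) : φ M.E = N.closure ∅ := by
  have h := hφ.mrank_add_mrank_eq M.ground_isFlat
  refine ((isFlat_closure ∅).eq_of_subset_of_mrank_le (hφ.flat M.ground_isFlat)
    ((hφ.flat M.ground_isFlat).closure_subset_of_subset (empty_subset _)) ?_).symm
  unfold mrk at h
  omega

lemma inter_eq_of_mrank_eq_add_one (hφ : IsAdjointMap M N φ) (hP : M.IsFlat P)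
    (hQ : M.IsFlat Q) (hG : M.IsFlat G) (hPG : P ⊆ G) (hQG : Q ⊆ G) (hPQ : P ≠ Q)
    (hrP : mrank M G = mrank M P + 1) (hrQ : mrank M G = mrank M Q + 1) :
    φ P ∩ φ Q = φ G := by
  have := hφ.mrank_add_mrank_eq hP
  have := hφ.mrank_add_mrank_eq hQ
  have := hφ.mrank_add_mrank_eq hG
  exact (hφ.flat hG).inter_eq_of_mrank_eq_add_one (hφ.flat hP) (hφ.flat hQ)
    (hφ.antitone hP hG hPG) (hφ.antitone hQ hG hQG) (fun h ↦ hPQ (hφ.inj hP hQ h))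
    (by omega) (by omega)

lemma subset_image_closure_insert_closure_insert (hφ : IsAdjointMap M N φ) (hF : M.IsFlat F)
    (hq : q ∈ M.E \ F) (hW : M.IsFlat W) (hWF : W ⊆ F) (hy : y ∈ F \ W)
    (h : φ F ⊆ φ (M.closure (insert q W))) :
    φ F ⊆ φ (M.closure (insert q (M.closure (insert y W)))) := by
  set W' := M.closure (insert y W)
  have hW' : M.IsFlat W' := isFlat_closure _
  have hW'F : W' ⊆ F := hF.closure_subset_of_subset (insert_subset hy.1 hWF)
  have hyE : y ∈ M.E := hF.subset_ground hy.1
  have hWW' : W ⊆ W' :=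
    (subset_insert _ _).trans (M.subset_closure _ (insert_subset hyE hW.subset_ground))
  have hqW' : q ∈ M.E \ W' := ⟨hq.1, fun h ↦ hq.2 (hW'F h)⟩
  have hqZ : q ∈ M.closure (insert q W) :=
    M.subset_closure _ (insert_subset hq.1 hW.subset_ground) (mem_insert q W)
  have hW'Z' : W' ⊆ M.closure (insert q W') :=
    (subset_insert q W').trans (M.subset_closure _ (insert_subset hq.1 hW'.subset_ground))
  have hrZ' := hW'.mrank_closure_insert hqW'
  have hrZ := hW.mrank_closure_insert ⟨hq.1, fun h ↦ hq.2 (hWF h)⟩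
  have hrW' : mrank M W' = mrank M W + 1 := hW.mrank_closure_insert ⟨hyE, hy.2⟩
  rw [← hφ.inter_eq_of_mrank_eq_add_one (isFlat_closure _) hW' (isFlat_closure _)
    (M.closure_subset_closure (insert_subset_insert hWW')) hW'Z'
    (fun h ↦ hqW'.2 (h ▸ hqZ)) (by omega) hrZ']
  exact subset_inter h (hφ.antitone hW' hF hW'F)

/-- Starting from `cl {q} ⊆ V` and adding the elements of `H` one at a time, every flat
`cl (insert q W)` with `W ⊆ H` keeps `φ H ⊆ φ (cl (insert q W))`; at `W = H` this flat is the
whole ground set, whose image contains no atom. -/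
lemma subset_of_image_hyperplane_subset (hφ : IsAdjointMap M N φ) (hH : IsHyperplane M H)
    (hV : M.IsFlat V) (h : φ H ⊆ φ V) : V ⊆ H := by
  by_contra hVH
  obtain ⟨q, hqV, hqH⟩ := not_subset.1 hVH
  have hq : q ∈ M.E \ H := ⟨hV.subset_ground hqV, hqH⟩
  have climb : ∀ n ≤ mrank M H, ∃ W, M.IsFlat W ∧ W ⊆ H ∧ mrank M W = n ∧
      φ H ⊆ φ (M.closure (insert q W)) := by
    intro n
    induction n with
    | zero =>
      refine fun _ ↦ ⟨M.closure ∅, isFlat_closure _,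
        hH.1.closure_subset_of_subset (empty_subset _),
        by rw [mrank_closure, mrank_empty], h.trans (hφ.antitone (isFlat_closure _) hV ?_)⟩
      rw [closure_insert_closure_eq_closure_insert, insert_empty_eq]
      exact hV.closure_subset_of_subset (singleton_subset_iff.2 hqV)
    | succ n ih =>
      intro hn
      obtain ⟨W, hW, hWH, rfl, hWq⟩ := ih (by omega)
      obtain ⟨y, hyH, hyW⟩ := not_subset.1 fun hHW : H ⊆ W ↦ by
        have := mrank_mono (M := M) hHW
        omega
      exact ⟨_, isFlat_closure _, hH.1.closure_subset_of_subset (insert_subset hyH hWH),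
        hW.mrank_closure_insert ⟨hH.1.subset_ground hyH, hyW⟩,
        hφ.subset_image_closure_insert_closure_insert hH.1 hq hW hWH ⟨hyH, hyW⟩ hWq⟩
  obtain ⟨W, hW, hWH, hrW, hWq⟩ := climb _ le_rfl
  rw [hW.eq_of_subset_of_mrank_le hH.1 hWH hrW.ge] at hWq
  have hspan : M.closure (insert q H) = M.E := hH.2.2 _ (isFlat_closure _)
    ⟨(subset_insert q H).trans (M.subset_closure _ (insert_subset hq.1 hH.1.subset_ground)),
      fun hsub ↦ hqH (hsub (M.subset_closure _ (insert_subset hq.1 hH.1.subset_ground)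
        (mem_insert q H)))⟩
  rw [hspan, hφ.image_ground] at hWq
  exact (hφ.hyper_atom hH).2.1.not_subset hWq

lemma notMem_closure_of_not_subset (hφ : IsAdjointMap M N φ) (hG : M.IsFlat G)
    (hH : IsHyperplane M H) (hGH : ¬ G ⊆ H) {Y : Set β} (hY : Y ⊆ φ G) {e : β}
    (he : e ∈ φ H \ N.closure ∅) : e ∉ N.closure Y := fun hcl ↦ by
  have heG : e ∈ φ G := (hφ.flat hG).closure_subset_of_subset hY hcl
  refine hGH (hφ.subset_of_image_hyperplane_subset hH hG ?_)
  rw [← (hφ.hyper_atom hH).closure_singleton_eq he]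
  exact (hφ.flat hG).closure_subset_of_subset (singleton_subset_iff.2 heG)

end IsAdjointMap

/-- a strictly decreasing chain of intersections of hyperplanes of
`M` yields an independent set of atoms in the adjoint. -/
theorem statement_1 {M : Matroid α} {N : Matroid β} [M.Finite] [N.Finite]
    {φ : Set α → Set β} (hφ : IsAdjointMap M N φ) {m : ℕ}
    (H : Fin m → Set α) (hH : ∀ i, IsHyperplane M (H i))
    (hchain : ∀ i j : Fin m, i < j →
      (⋂ k ∈ {k : Fin m | k ≤ j}, H k) ⊂ ⋂ k ∈ {k : Fin m | k ≤ i}, H k)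
    (f : Fin m → β) (hf : ∀ i, f i ∈ φ (H i) \ N.closure ∅) :
    N.Indep (Set.range f) := by
  refine indep_range_of_notMem_closure_image_Iio
    (fun i ↦ (hφ.flat (hH i).1).subset_ground (hf i).1) fun j ↦ ?_
  obtain hj | hj := (Iio j).eq_empty_or_nonempty
  · simpa [hj] using (hf j).2
  have hG : M.IsFlat (⋂ k ∈ Iio j, H k) := IsFlat.biInter hj fun k _ ↦ (hH k).1
  refine hφ.notMem_closure_of_not_subset hG (hH j) (fun hsub ↦ ?_) ?_ (hf j)
  · have hjmin : ¬ IsMin j := not_isMin_iff.2 hj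
    refine (hchain _ j (Order.pred_lt_of_not_isMin hjmin)).not_subset ?_
    rw [show {k | k ≤ Order.pred j} = Iio j from Iic_pred_eq_Iio_of_not_isMin hjmin]
    refine subset_iInter₂ fun k (hk : k ≤ j) ↦ ?_
    obtain hk | rfl := hk.lt_or_eq
    · exact biInter_subset_of_mem hk
    · exact hsub
  · rintro _ ⟨k, hk, rfl⟩
    exact hφ.antitone hG (hH k).1 (biInter_subset_of_mem hk) (hf k).1

end AdjointPaper
end

section
/- Let M be a matroid of rank r and adM an adjoint of M with ground set C(M*) (the set of cocircuits of M), so that C*[e] = {C* : e ∉ C*} is a hyperplane of adM for each non-loop e. If B is a basis of M, then the set of fundamental cocircuits {C*(e;B) : e ∈ B} is a basis of adM. -/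
/-!
Every `e ∈ B` lies in its own fundamental cocircuit `C*(e;B)` and in no other, so the
hyperplane `C*[e]` of the adjoint contains all fundamental cocircuits except `C*(e;B)`.
Hence no fundamental cocircuit lies in the closure of the others: they form an independent
set of the adjoint of size `|B| = r`, which is a basis since the adjoint has rank `r`.
-/

open Set Matroid
open scoped Matroid

namespace AdjointPaper

variable {α β γ : Type*}

lemma isCircuit_iff_isCircuit {M : Matroid α} {C : Set α} :
    IsCircuit M C ↔ M.IsCircuit C := by
  rw [isCircuit_iff_forall_ssubset, Dep, IsCircuit]
  tauto

lemma _root_.Matroid.IsBase.ncard_eq_mrk {M : Matroid α} [M.Finite] {B : Set α}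
    (hB : M.IsBase B) : B.ncard = mrk M := by
  refine le_antisymm ?_ (csSup_le ⟨B.ncard, B, ⟨hB.indep, hB.subset_ground⟩, rfl⟩ ?_)
  · refine le_csSup ⟨M.E.ncard, ?_⟩ ⟨B, ⟨hB.indep, hB.subset_ground⟩, rfl⟩
    rintro _ ⟨I, ⟨-, hIE⟩, rfl⟩
    exact ncard_le_ncard hIE M.ground_finite
  · rintro _ ⟨I, ⟨hI, -⟩, rfl⟩
    obtain ⟨B', hB', hIB'⟩ := hI.exists_isBase_superset
    calc I.ncard ≤ B'.ncard := ncard_le_ncard hIB' (M.set_finite B' hB'.subset_ground)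
      _ = B.ncard := hB'.ncard_eq_ncard_of_isBase hB

lemma _root_.Matroid.Indep.isBase_of_mrk_le_ncard {M : Matroid α} [M.Finite] {I : Set α}
    (hI : M.Indep I) (hle : mrk M ≤ I.ncard) : M.IsBase I := by
  obtain ⟨B, hB, hIB⟩ := hI.exists_isBase_superset
  have hBI : I = B := eq_of_subset_of_ncard_le hIB (hB.ncard_eq_mrk ▸ hle)
    (M.set_finite B hB.subset_ground)
  exact hBI ▸ hB

lemma indep_of_forall_exists_isFlat {M : Matroid α} {X : Set α} (hXE : X ⊆ M.E)
    (hsep : ∀ x ∈ X, ∃ F, M.IsFlat F ∧ X \ {x} ⊆ F ∧ x ∉ F) : M.Indep X := by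
  rw [indep_iff_forall_notMem_closure_sdiff hXE]
  intro x hx hcl
  obtain ⟨F, hF, hXF, hxF⟩ := hsep x hx
  exact hxF (hF.closure ▸ M.closure_subset_closure hXF hcl)

lemma _root_.Matroid.IsBase.mem_compl_closure_sdiff_singleton_iff {M : Matroid α} {B : Set α}
    (hB : M.IsBase B) {e f : α} (he : e ∈ B) (hf : f ∈ B) :
    e ∈ M.E \ M.closure (B \ {f}) ↔ e = f := by
  refine ⟨fun ⟨_, hecl⟩ ↦ by_contra fun hef ↦ hecl ?_, ?_⟩
  · exact M.subset_closure _ (sdiff_subset.trans hB.subset_ground) ⟨he, hef⟩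
  · rintro rfl
    exact ⟨hB.subset_ground he, hB.indep.notMem_closure_sdiff_of_mem he⟩

/-- the fundamental cocircuits of a basis of `M` form a basis of
an adjoint realized on the cocircuit ground set. -/
theorem statement_18 {M : Matroid α} {N : Matroid (Set α)} [M.Finite] [N.Finite]
    {r : ℕ} (hrM : mrk M = r) (hrN : mrk N = r)
    (hE : N.E = {C | IsCircuit M✶ C})
    (hHyp : ∀ e ∈ M.E, ¬ IsLoop M e →
      IsHyperplane N {C | IsCircuit M✶ C ∧ e ∉ C})
    {B : Set α} (hB : M.IsBase B) :
    N.IsBase ((fun e => M.E \ M.closure (B \ {e})) '' B) := by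
  set cocircuit : α → Set α := fun e => M.E \ M.closure (B \ {e})
  have hmem : ∀ e ∈ B, ∀ f ∈ B, e ∈ cocircuit f ↔ e = f := fun e he f hf ↦
    hB.mem_compl_closure_sdiff_singleton_iff he hf
  have hcocircuit : ∀ e ∈ B, IsCircuit M✶ (cocircuit e) := fun e he ↦
    isCircuit_iff_isCircuit.2 (hB.compl_closure_sdiff_singleton_isCocircuit he)
  have hinj : InjOn cocircuit B := fun e he f hf hef ↦
    (hmem e he f hf).1 (hef ▸ (hmem e he e he).2 rfl)
  have hindep : N.Indep (cocircuit '' B) := by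
    refine indep_of_forall_exists_isFlat (hE ▸ image_subset_iff.2 hcocircuit) ?_
    rintro _ ⟨e, he, rfl⟩
    have hnonloop : ¬ IsLoop M e := fun h ↦ h.2 (hB.indep.subset (singleton_subset_iff.2 he))
    refine ⟨_, (hHyp e (hB.subset_ground he) hnonloop).1, ?_,
      fun h ↦ h.2 ((hmem e he e he).2 rfl)⟩
    rintro _ ⟨⟨f, hf, rfl⟩, hne⟩
    exact ⟨hcocircuit f hf, fun hef ↦ hne ((hmem e he f hf).1 hef ▸ rfl)⟩
  refine hindep.isBase_of_mrk_le_ncard ?_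
  rw [hinj.ncard_image, hB.ncard_eq_mrk, hrM, hrN]

end AdjointPaper
end
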